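/- Let m ≥ 1 and k₁,…,k_m ≥ 1 be integers, N ≥ k + m with k := k₁+⋯+k_m, and τ₁,…,τ_m > 0. Define φ_i(t) := (1/(k_i+1))·(1 − (τ_i/t)^{k_i+1}) for t > 0, and χ(y¹,…,y^m,z) := (φ₁(|y¹|)y¹, …, φ_m(|y^m|)y^m, z) for y^i ∈ ℝ^{k_i+1}∖{0} and z ∈ ℝ^{N−k−m}. Then the divergence of χ satisfies div χ(y¹,…,y^m,z) = N − k at every such point. -/

import Mathlib

/-! Each block field `y ↦ φ(|y|) y` on `ℝ^{n}`, `n = k + 1`, has divergence `n φ(r) + r φ'(r)`,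
where `r = |y|`. The profile `φ(t) = (1 - (τ/t)^n)/n` solves `n φ + t φ' = 1`, so each of the
`m` blocks contributes `1` and the identity on the last `N - k - m` coordinates contributes
`N - k - m`. -/

/-- The i-th block `y^i ∈ ℝ^{k_i+1}` of a point of
`ℝ^N = ℝ^{k₁+1} × ⋯ × ℝ^{k_m+1} × ℝ^{N-k-m}`. -/
def blockOf {m : ℕ} {k : Fin m → ℕ} {d : ℕ}
    (x : EuclideanSpace ℝ ((Σ i : Fin m, Fin (k i + 1)) ⊕ Fin d)) (i : Fin m) :
    EuclideanSpace ℝ (Fin (k i + 1)) :=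
  WithLp.toLp 2 (fun a => x (Sum.inl ⟨i, a⟩))

/-- The vector field χ(y¹,…,y^m,z) = (φ₁(|y¹|)y¹,…,φ_m(|y^m|)y^m, z), where
φ_i(t) = (1/(k_i+1))(1 − (τ_i/t)^{k_i+1}). -/
noncomputable def chiField {m : ℕ} {k : Fin m → ℕ} {d : ℕ} (τ : Fin m → ℝ)
    (x : EuclideanSpace ℝ ((Σ i : Fin m, Fin (k i + 1)) ⊕ Fin d)) :
    EuclideanSpace ℝ ((Σ i : Fin m, Fin (k i + 1)) ⊕ Fin d) :=
  WithLp.toLp 2 (fun j => Sum.elim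
    (fun p : Σ i : Fin m, Fin (k i + 1) =>
      ((1 / ((k p.1 : ℝ) + 1)) * (1 - (τ p.1 / ‖blockOf x p.1‖) ^ (k p.1 + 1))) * x (Sum.inl p))
    (fun j' => x (Sum.inr j')) j)

open Finset

noncomputable def divergence {ι : Type*} [Fintype ι] [DecidableEq ι]
    (F : EuclideanSpace ℝ ι → EuclideanSpace ℝ ι) (x : EuclideanSpace ℝ ι) : ℝ :=
  ∑ j, fderiv ℝ F x (EuclideanSpace.single j 1) j

theorem fderiv_euclidean_apply {H ι : Type*} [NormedAddCommGroup H] [NormedSpace ℝ H]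
    [Fintype ι] {F : H → EuclideanSpace ℝ ι} {x : H} (hF : DifferentiableAt ℝ F x) (v : H)
    (j : ι) : fderiv ℝ F x v j = fderiv ℝ (fun z => F z j) x v := by
  have h := ((EuclideanSpace.proj j).hasFDerivAt.comp x hF.hasFDerivAt).fderiv
  exact (DFunLike.congr_fun h v).symm

theorem divergence_eq_sum_fderiv {ι : Type*} [Fintype ι] [DecidableEq ι]
    {F : EuclideanSpace ℝ ι → EuclideanSpace ℝ ι} {x : EuclideanSpace ℝ ι}
    (hF : DifferentiableAt ℝ F x) :
    divergence F x = ∑ j, fderiv ℝ (fun z => F z j) x (EuclideanSpace.single j 1) :=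
  sum_congr rfl fun j _ => fderiv_euclidean_apply hF _ j

section RadialField

variable {E : Type*} [NormedAddCommGroup E] [InnerProductSpace ℝ E]

theorem hasFDerivAt_norm_of_ne_zero {y : E} (hy : y ≠ 0) :
    HasFDerivAt (fun z : E => ‖z‖) (‖y‖⁻¹ • innerSL ℝ y) y := by
  have hy' : ‖y‖ ≠ 0 := norm_ne_zero_iff.mpr hy
  have h := (hasStrictFDerivAt_norm_sq y).hasFDerivAt.sqrt (pow_ne_zero 2 hy')
  simp only [Real.sqrt_sq (norm_nonneg _)] at h
  convert h using 1
  ext v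
  simp only [smul_apply, innerSL_apply_apply, smul_eq_mul, nsmul_eq_mul]
  field_simp
  ring

def radialField (φ : ℝ → ℝ) (y : E) : E := φ ‖y‖ • y

theorem hasFDerivAt_radialField {φ : ℝ → ℝ} {φ' : ℝ} {y : E} (hy : y ≠ 0)
    (hφ : HasDerivAt φ φ' ‖y‖) :
    HasFDerivAt (radialField φ)
      (φ ‖y‖ • ContinuousLinearMap.id ℝ E + (φ' • ‖y‖⁻¹ • innerSL ℝ y).smulRight y) y :=
  (hφ.comp_hasFDerivAt y (hasFDerivAt_norm_of_ne_zero hy)).smul (hasFDerivAt_id y)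

theorem divergence_radialField {ι : Type*} [Fintype ι] [DecidableEq ι] {φ : ℝ → ℝ} {φ' : ℝ}
    {y : EuclideanSpace ℝ ι} (hy : y ≠ 0) (hφ : HasDerivAt φ φ' ‖y‖) :
    divergence (radialField φ) y = Fintype.card ι * φ ‖y‖ + ‖y‖ * φ' := by
  have hy' : ‖y‖ ≠ 0 := norm_ne_zero_iff.mpr hy
  simp only [divergence, (hasFDerivAt_radialField hy hφ).fderiv, add_apply, smul_apply,
    ContinuousLinearMap.id_apply, ContinuousLinearMap.smulRight_apply, innerSL_apply_apply,
    EuclideanSpace.inner_single_right, conj_trivial, smul_eq_mul, PiLp.add_apply, PiLp.smul_apply,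
    PiLp.single_eq_same, mul_one, one_mul, sum_add_distrib, sum_const, card_univ, nsmul_eq_mul, add_right_inj]
  simp only [mul_assoc, ← mul_sum, ← sq, ← EuclideanSpace.real_norm_sq_eq]
  field_simp

end RadialField

noncomputable def shellProfile (k : ℕ) (τ t : ℝ) : ℝ :=
  1 / ((k : ℝ) + 1) * (1 - (τ / t) ^ (k + 1))

theorem hasDerivAt_shellProfile (k : ℕ) (τ : ℝ) {t : ℝ} (ht : t ≠ 0) :
    HasDerivAt (shellProfile k τ) (τ ^ (k + 1) / t ^ (k + 2)) t := by
  have h := ((((hasDerivAt_const t τ).fun_div (hasDerivAt_id' t) ht).fun_pow (k + 1)).const_sub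
    1).const_mul (1 / ((k : ℝ) + 1))
  refine h.congr_deriv ?_
  rw [Nat.add_sub_cancel, div_pow]
  push_cast
  field_simp
  ring

theorem divergence_radialField_shellProfile {k : ℕ} (τ : ℝ) {y : EuclideanSpace ℝ (Fin (k + 1))}
    (hy : y ≠ 0) : divergence (radialField (shellProfile k τ)) y = 1 := by
  have hy' : ‖y‖ ≠ 0 := norm_ne_zero_iff.mpr hy
  rw [divergence_radialField hy (hasDerivAt_shellProfile k τ hy'), Fintype.card_fin,
    shellProfile, div_pow]
  push_cast
  field_simp
  ring

theorem differentiableAt_radialField_shellProfile {ι : Type*} [Fintype ι] (k : ℕ) (τ : ℝ)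
    {y : EuclideanSpace ℝ ι} (hy : y ≠ 0) :
    DifferentiableAt ℝ (radialField (shellProfile k τ)) y :=
  (hasFDerivAt_radialField hy
    (hasDerivAt_shellProfile k τ (norm_ne_zero_iff.mpr hy))).differentiableAt

section Blocks

variable {m : ℕ} {k : Fin m → ℕ} {d : ℕ}

noncomputable def blockOfCLM (i : Fin m) :
    EuclideanSpace ℝ ((Σ i : Fin m, Fin (k i + 1)) ⊕ Fin d) →L[ℝ]
      EuclideanSpace ℝ (Fin (k i + 1)) :=
  (PiLp.continuousLinearEquiv 2 ℝ _).symm.toContinuousLinearMap.comp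
    (ContinuousLinearMap.pi fun a => EuclideanSpace.proj (Sum.inl ⟨i, a⟩))

theorem blockOfCLM_apply (i : Fin m) (x : EuclideanSpace ℝ ((Σ i : Fin m, Fin (k i + 1)) ⊕ Fin d)) :
    blockOfCLM i x = blockOf x i :=
  rfl

theorem blockOf_single_inl (i : Fin m) (a : Fin (k i + 1)) :
    blockOf (EuclideanSpace.single (Sum.inl ⟨i, a⟩ : (Σ i : Fin m, Fin (k i + 1)) ⊕ Fin d)
      (1 : ℝ)) i = EuclideanSpace.single a 1 := by
  ext b
  simp [blockOf, PiLp.single_apply]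

theorem chiField_apply_inl (τ : Fin m → ℝ)
    (x : EuclideanSpace ℝ ((Σ i : Fin m, Fin (k i + 1)) ⊕ Fin d)) (p : Σ i : Fin m, Fin (k i + 1)) :
    chiField τ x (Sum.inl p) = radialField (shellProfile (k p.1) (τ p.1)) (blockOf x p.1) p.2 :=
  rfl

theorem chiField_apply_inr (τ : Fin m → ℝ)
    (x : EuclideanSpace ℝ ((Σ i : Fin m, Fin (k i + 1)) ⊕ Fin d)) (j : Fin d) :
    chiField τ x (Sum.inr j) = x (Sum.inr j) :=
  rfl

theorem differentiableAt_chiField (τ : Fin m → ℝ)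
    {x : EuclideanSpace ℝ ((Σ i : Fin m, Fin (k i + 1)) ⊕ Fin d)} (hx : ∀ i, blockOf x i ≠ 0) :
    DifferentiableAt ℝ (chiField τ) x := by
  refine differentiableAt_euclidean.2 ?_
  rintro (p | j)
  · simp only [chiField_apply_inl, ← blockOfCLM_apply]
    have hg := (differentiableAt_radialField_shellProfile (k p.1) (τ p.1) (hx p.1)).comp x
      (blockOfCLM p.1).differentiableAt
    exact differentiableAt_euclidean.1 hg p.2
  · exact (PiLp.hasFDerivAt_apply (𝕜 := ℝ) 2 x (Sum.inr j)).differentiableAt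

theorem fderiv_chiField_apply_inl (τ : Fin m → ℝ)
    {x : EuclideanSpace ℝ ((Σ i : Fin m, Fin (k i + 1)) ⊕ Fin d)} {i : Fin m}
    (hx : blockOf x i ≠ 0) (a : Fin (k i + 1)) :
    fderiv ℝ (fun z => chiField τ z (Sum.inl ⟨i, a⟩)) x (EuclideanSpace.single (Sum.inl ⟨i, a⟩) 1)
      = fderiv ℝ (radialField (shellProfile (k i) (τ i))) (blockOf x i)
          (EuclideanSpace.single a 1) a := by
  have hg := differentiableAt_radialField_shellProfile (k i) (τ i) hx
  have hcomp : (fun z => chiField (d := d) τ z (Sum.inl ⟨i, a⟩))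
      = (fun y : EuclideanSpace ℝ (Fin (k i + 1)) => radialField (shellProfile (k i) (τ i)) y a) ∘
        blockOfCLM i :=
    rfl
  rw [hcomp, fderiv_comp x (differentiableAt_euclidean.1 hg a) (blockOfCLM i).differentiableAt,
    ContinuousLinearMap.fderiv, ContinuousLinearMap.comp_apply, blockOfCLM_apply, blockOfCLM_apply,
    blockOf_single_inl, fderiv_euclidean_apply hg]

theorem divergence_chiField (τ : Fin m → ℝ)
    {x : EuclideanSpace ℝ ((Σ i : Fin m, Fin (k i + 1)) ⊕ Fin d)} (hx : ∀ i, blockOf x i ≠ 0) :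
    divergence (chiField τ) x = m + d := by
  have hblock : ∀ i, ∑ a, fderiv ℝ (fun z => chiField τ z (Sum.inl ⟨i, a⟩)) x
      (EuclideanSpace.single (Sum.inl ⟨i, a⟩) 1) = 1 := fun i => by
    simp only [fderiv_chiField_apply_inl τ (hx i)]
    exact divergence_radialField_shellProfile (τ i) (hx i)
  have hflat : ∀ j, fderiv ℝ (fun z => chiField τ z (Sum.inr j)) x
      (EuclideanSpace.single (Sum.inr j) 1) = 1 := fun j => by
    simp only [chiField_apply_inr]
    rw [(PiLp.hasFDerivAt_apply (𝕜 := ℝ) 2 x (Sum.inr j)).fderiv, PiLp.proj_apply,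
      PiLp.single_eq_same]
  rw [divergence_eq_sum_fderiv (differentiableAt_chiField τ hx), Fintype.sum_sum_type,
    ← univ_sigma_univ, sum_sigma]
  simp only [hblock, hflat, sum_const, card_univ, Fintype.card_fin, nsmul_eq_mul, mul_one]

end Blocks

theorem stmt_9_general (m : ℕ) (k : Fin m → ℕ) (N : ℕ)
    (hN : (∑ i, k i) + m ≤ N) (τ : Fin m → ℝ)
    (x : EuclideanSpace ℝ ((Σ i : Fin m, Fin (k i + 1)) ⊕ Fin (N - (∑ i, k i) - m)))
    (hx : ∀ i, blockOf x i ≠ 0) :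
    DifferentiableAt ℝ (chiField (d := N - (∑ i, k i) - m) τ) x ∧
    ∑ j, fderiv ℝ (chiField (d := N - (∑ i, k i) - m) τ) x (EuclideanSpace.single j 1) j
      = (N : ℝ) - ∑ i, (k i : ℝ) := by
  refine ⟨differentiableAt_chiField τ hx, ?_⟩
  have hd : ((N - ∑ i, k i - m : ℕ) : ℝ) = N - ∑ i, (k i : ℝ) - m := by
    rw [Nat.cast_sub (by omega), Nat.cast_sub (by omega), Nat.cast_sum]
  calc _ = divergence (chiField τ) x := rfl
    _ = m + (N - ∑ i, k i - m : ℕ) := divergence_chiField τ hx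
    _ = N - ∑ i, (k i : ℝ) := by rw [hd]; ring

/-- div χ = N − k at every point where all blocks are nonzero. -/
theorem stmt_9 (m : ℕ) (hm : 1 ≤ m) (k : Fin m → ℕ) (hk : ∀ i, 1 ≤ k i) (N : ℕ)
    (hN : (∑ i, k i) + m ≤ N) (τ : Fin m → ℝ) (hτ : ∀ i, 0 < τ i)
    (x : EuclideanSpace ℝ ((Σ i : Fin m, Fin (k i + 1)) ⊕ Fin (N - (∑ i, k i) - m)))
    (hx : ∀ i, blockOf x i ≠ 0) :
    DifferentiableAt ℝ (chiField (d := N - (∑ i, k i) - m) τ) x ∧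
    ∑ j, fderiv ℝ (chiField (d := N - (∑ i, k i) - m) τ) x (EuclideanSpace.single j 1) j
      = (N : ℝ) - ∑ i, (k i : ℝ) :=
  stmt_9_general m k N hN τ x hx
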